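/- If G is a cycle Cₙ with n ∉ {3, 6, 7, 11}, then ι₁(G) ≤ n/4. -/

import Mathlib

/-!
Take every fifth vertex `0, 5, 10, …` of `Cₙ`. The vertices it does not dominate are those
congruent to `2` or `3` mod `5`, except `n - 1`, which is adjacent to `0`; they span disjoint
edges, so the remaining graph has maximum degree at most `1`. The set has `⌈n/5⌉` elements,
and `4⌈n/5⌉ ≤ n` for every `n ≥ 3` outside `{3, 6, 7, 11}`.
-/

open SimpleGraph

/-- The closed neighborhood `N[D]` of a set `D` of vertices. -/
def SimpleGraph.closedNbhd {V : Type*} (G : SimpleGraph V) (D : Set V) : Set V :=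
  D ∪ {v | ∃ d ∈ D, G.Adj d v}

/-- `D` is a `K_{1,k+1}`-isolating set of `G`: every vertex outside `N[D]` has at most `k`
neighbors outside `N[D]`, i.e. `Δ(G − N[D]) ≤ k`. -/
def SimpleGraph.IsIsolatingSet {V : Type*} (G : SimpleGraph V) (k : ℕ) (D : Set V) : Prop :=
  ∀ v ∉ G.closedNbhd D, ({w | w ∉ G.closedNbhd D ∧ G.Adj v w}).ncard ≤ k

/-- The `k`-isolation number `ι_k(G)`: the least size of a `K_{1,k+1}`-isolating set. -/
noncomputable def SimpleGraph.isolNum {V : Type*} (G : SimpleGraph V) (k : ℕ) : ℕ :=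
  sInf {n | ∃ D : Set V, G.IsIsolatingSet k D ∧ D.ncard = n}

namespace SimpleGraph

theorem isolNum_le_ncard {V : Type*} {G : SimpleGraph V} {k : ℕ} {D : Set V}
    (hD : G.IsIsolatingSet k D) : G.isolNum k ≤ D.ncard :=
  Nat.sInf_le ⟨D, hD, rfl⟩

section cycleGraph

variable {n : ℕ}

theorem cycleGraph_adj_of_val_add_one_eq {u v : Fin n} (h : u.val + 1 = v.val) :
    (cycleGraph n).Adj u v :=
  pathGraph_le_cycleGraph (pathGraph_adj.2 (Or.inl h))

theorem cycleGraph_adj_of_val_add_one_eq_of_val_eq_zero {u v : Fin n} (hu : u.val + 1 = n)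
    (hv : v.val = 0) (hn : 2 ≤ n) : (cycleGraph n).Adj u v := by
  refine cycleGraph_adj'.2 (Or.inr ?_)
  rw [Fin.coe_sub_iff_lt.2 (by omega)]
  omega

theorem val_add_one_eq_or_of_cycleGraph_adj {u v : Fin n} (h : (cycleGraph n).Adj u v) :
    u.val + 1 = v.val ∨ v.val + 1 = u.val ∨ u.val + 1 = n ∨ v.val + 1 = n := by
  rcases cycleGraph_adj'.1 h with huv | hvu
  · rcases le_or_gt v u with hle | hlt
    · rw [Fin.coe_sub_iff_le.2 hle] at huv; omega
    · rw [Fin.coe_sub_iff_lt.2 hlt] at huv; omega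
  · rcases le_or_gt u v with hle | hlt
    · rw [Fin.coe_sub_iff_le.2 hle] at hvu; omega
    · rw [Fin.coe_sub_iff_lt.2 hlt] at hvu; omega

theorem val_mod_five_and_lt_of_notMem_closedNbhd {v : Fin n}
    (hv : v ∉ (cycleGraph n).closedNbhd {u | 5 ∣ u.val}) :
    (v.val % 5 = 2 ∨ v.val % 5 = 3) ∧ v.val + 1 < n := by
  have hnotAdj : ∀ u : Fin n, 5 ∣ u.val → ¬(cycleGraph n).Adj u v :=
    fun u hu hadj => hv (Or.inr ⟨u, hu, hadj⟩)
  have hv₀ : ¬5 ∣ v.val := fun h => hv (Or.inl h)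
  have hprev : v.val = 0 ∨ ¬5 ∣ v.val - 1 := by
    by_contra! h
    exact hnotAdj ⟨v.val - 1, by omega⟩ h.2
      (cycleGraph_adj_of_val_add_one_eq (Nat.sub_add_cancel (by omega)))
  have hnext : ∀ h : v.val + 1 < n, ¬5 ∣ v.val + 1 := fun h hdvd =>
    hnotAdj ⟨v.val + 1, h⟩ hdvd (cycleGraph_adj_of_val_add_one_eq rfl).symm
  have hlt : v.val + 1 < n := by
    by_contra hge
    have hlast : v.val + 1 = n := by omega
    refine hnotAdj ⟨0, by omega⟩ (dvd_zero 5)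
      (cycleGraph_adj_of_val_add_one_eq_of_val_eq_zero hlast rfl (by omega)).symm
  exact ⟨by omega, hlt⟩

theorem isIsolatingSet_cycleGraph_dvd_five :
    (cycleGraph n).IsIsolatingSet 1 {u | 5 ∣ u.val} := by
  intro v hv
  rw [Set.ncard_le_one_iff]
  rintro w w' ⟨hw, hvw⟩ ⟨hw', hvw'⟩
  have hv_mod := val_mod_five_and_lt_of_notMem_closedNbhd hv
  have hw_mod := val_mod_five_and_lt_of_notMem_closedNbhd hw
  have hw'_mod := val_mod_five_and_lt_of_notMem_closedNbhd hw'
  have hvw_val := val_add_one_eq_or_of_cycleGraph_adj hvw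
  have hvw'_val := val_add_one_eq_or_of_cycleGraph_adj hvw'
  -- `v ≡ 2` forces `w = v + 1` and `v ≡ 3` forces `w = v - 1` (mod 5), the other neighbour
  -- being dominated.
  exact Fin.ext (by omega)

theorem ncard_setOf_five_dvd_val_le : {u : Fin n | 5 ∣ u.val}.ncard ≤ (n + 4) / 5 := by
  calc {u : Fin n | 5 ∣ u.val}.ncard
      ≤ (Set.Iio ((n + 4) / 5)).ncard := by
        refine Set.ncard_le_ncard_of_injOn (fun u => u.val / 5) (fun u _ => ?_)
          (fun u hu u' hu' h => Fin.ext ?_) (Set.finite_Iio _)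
        · simp only [Set.mem_Iio]; omega
        · simp only [Set.mem_ofPred_eq] at hu hu' h; omega
    _ = (n + 4) / 5 := Set.ncard_Iio_nat _

end cycleGraph

end SimpleGraph

/-- If G is a cycle on n vertices with n not in {3,6,7,11}, then ι₁(G) ≤ n/4. -/
theorem isolNum_one_cycle (n : ℕ) (hn : 3 ≤ n) (h : n ∉ ({3, 6, 7, 11} : Set ℕ)) :
    ((cycleGraph n).isolNum 1 : ℝ) ≤ (n : ℝ) / 4 := by
  simp only [Set.mem_insert_iff, Set.mem_singleton_iff, not_or] at h
  have hle : (cycleGraph n).isolNum 1 ≤ (n + 4) / 5 :=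
    (isolNum_le_ncard isIsolatingSet_cycleGraph_dvd_five).trans ncard_setOf_five_dvd_val_le
  rw [le_div_iff₀ (by norm_num)]
  exact_mod_cast (by omega : (cycleGraph n).isolNum 1 * 4 ≤ n)
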